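/- arXiv:1705.03538 — 2 statements merged into one kernel-verified Lean document; each statement's English description precedes it below -/
import Mathlib

section
/- An isometry between lattice shapes maps lattice vertices to lattice vertices: if S and S' are shapes of the triangular lattice drawing G_D, S' is minimal, σ is a similarity of the plane with scale factor 1 (an isometry) such that S = σ(S'), then for every point p in the plane, p is a vertex of G_D if and only if σ(p) is a vertex of G_D. -/
/-!
An isometry of `ℂ` is `z ↦ a z + b` or `z ↦ a z̄ + b` with `|a| = 1`. Since `ℤ[ω]` is a ring
closed under conjugation and the conjugate of a shape is again a union of lattice cells, it is
enough to show `a, b ∈ ℤ[ω]` when `σ z = a z + b`.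

Choose `u` such that neither `u` nor `u a` is orthogonal to a nonzero lattice vector. If `y`
maximizes `Re (u a z)` on `S'`, then `x = a y + b` maximizes `Re (u z)` on `S`, and both are
lattice vertices; so `b = x - a y` lies in the lattice once `a` does. All unit directions in
which `S` leaves `x` lie in the open half-plane `Re (u ·) < 0`, and the most counterclockwise
of them is a lattice edge direction `m`; likewise `m'` for `S'` at `y`. The rotation by `a`
maps the directions at `y` onto those at `x` and preserves orientation, so `a m' = m`, and
`a = m m̄'` is a lattice point.
-/

/-- The sixth root of unity `ω = e^{iπ/3}` generating the triangular lattice. -/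
noncomputable def omg : ℂ := Complex.exp ((Real.pi : ℂ) * Complex.I / 3)

/-- The vertex set of the triangular lattice drawing `G_D`: the Eisenstein integers. -/
def TriLattice : Set ℂ := {z | ∃ a b : ℤ, z = (a : ℂ) + (b : ℂ) * omg}

/-- An edge of `G_D`: a unit segment between two lattice vertices at distance 1. -/
def IsEdgeGD (e : Set ℂ) : Prop :=
  ∃ u v : ℂ, u ∈ TriLattice ∧ v ∈ TriLattice ∧ ‖u - v‖ = 1 ∧ e = segment ℝ u v

/-- A face of `G_D`: a unit equilateral triangle with lattice vertices. -/
def IsFaceGD (f : Set ℂ) : Prop :=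
  ∃ u v w : ℂ, u ∈ TriLattice ∧ v ∈ TriLattice ∧ w ∈ TriLattice ∧
    ‖u - v‖ = 1 ∧ ‖v - w‖ = 1 ∧ ‖u - w‖ = 1 ∧
    f = convexHull ℝ {u, v, w}

/-- A shape: a nonempty connected finite union of edges and faces of `G_D`. -/
def IsShape (S : Set ℂ) : Prop :=
  S.Nonempty ∧ IsConnected S ∧
    ∃ F : Set (Set ℂ), F.Finite ∧ (∀ e ∈ F, IsEdgeGD e ∨ IsFaceGD e) ∧ S = ⋃₀ F

/-- The size of a shape: the number of lattice vertices lying in it. -/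
noncomputable def shapeSize (S : Set ℂ) : ℕ := (TriLattice ∩ S).ncard

/-- `σ` is a similarity of the plane with (positive) ratio `r`. -/
def IsSimilarityMap (σ : ℂ → ℂ) (r : ℝ) : Prop :=
  ∀ p q : ℂ, dist (σ p) (σ q) = r * dist p q

/-- Two sets are similar (equivalent shapes). -/
def SimilarShapes (S T : Set ℂ) : Prop :=
  ∃ σ : ℂ → ℂ, ∃ r : ℝ, 0 < r ∧ IsSimilarityMap σ r ∧ T = σ '' S

/-- A minimal shape: no equivalent shape has smaller size. -/
def MinimalShape (S : Set ℂ) : Prop :=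
  IsShape S ∧ ∀ T : Set ℂ, IsShape T → SimilarShapes S T → shapeSize S ≤ shapeSize T

open Complex ComplexConjugate Set Filter Topology

lemma omg_eq : omg = (1 / 2 : ℝ) + (Real.sqrt 3 / 2 : ℝ) * I := by
  have h : (Real.pi : ℂ) * I / 3 = ((Real.pi / 3 : ℝ) : ℂ) * I := by push_cast; ring
  rw [omg, h, exp_mul_I, ← ofReal_cos, ← ofReal_sin, Real.cos_pi_div_three,
    Real.sin_pi_div_three]

lemma omg_sq : omg ^ 2 = omg - 1 := by
  have h3 : ((Real.sqrt 3 : ℝ) : ℂ) ^ 2 = 3 := by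
    rw [← ofReal_pow, Real.sq_sqrt (by norm_num : (0 : ℝ) ≤ 3)]; norm_num
  rw [omg_eq]
  push_cast
  linear_combination (I ^ 2 / 4) * h3 + (3 / 4 : ℂ) * I_sq

lemma conj_omg : conj omg = 1 - omg := by
  rw [omg_eq, map_add, map_mul, conj_I, conj_ofReal, conj_ofReal]
  push_cast
  ring

namespace TriLattice

def subring : Subring ℂ where
  carrier := TriLattice
  mul_mem' := by
    rintro _ _ ⟨a, b, rfl⟩ ⟨c, d, rfl⟩
    refine ⟨a * c - b * d, a * d + b * c + b * d, ?_⟩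
    push_cast
    linear_combination ((b : ℂ) * d) * omg_sq
  one_mem' := ⟨1, 0, by simp⟩
  add_mem' := by
    rintro _ _ ⟨a, b, rfl⟩ ⟨c, d, rfl⟩
    exact ⟨a + c, b + d, by push_cast; ring⟩
  zero_mem' := ⟨0, 0, by simp⟩
  neg_mem' := by
    rintro _ ⟨a, b, rfl⟩
    exact ⟨-a, -b, by push_cast; ring⟩

lemma conj_mem {z : ℂ} (hz : z ∈ TriLattice) : conj z ∈ TriLattice := by
  obtain ⟨a, b, rfl⟩ := hz
  refine ⟨a + b, -b, ?_⟩
  rw [map_add, map_mul, map_intCast, map_intCast, conj_omg]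
  push_cast
  ring

lemma conj_mem_iff {z : ℂ} : conj z ∈ TriLattice ↔ z ∈ TriLattice :=
  ⟨fun h => by simpa using conj_mem h, conj_mem⟩

lemma countable : TriLattice.Countable := by
  refine (countable_range fun p : ℤ × ℤ => (p.1 : ℂ) + p.2 * omg).mono ?_
  rintro _ ⟨a, b, rfl⟩
  exact ⟨(a, b), rfl⟩

lemma mul_add_mem_iff {a b p : ℂ} (ha : a ∈ TriLattice) (hb : b ∈ TriLattice)
    (ha1 : ‖a‖ = 1) : a * p + b ∈ TriLattice ↔ p ∈ TriLattice := by
  refine ⟨fun h => ?_, fun h => subring.add_mem (subring.mul_mem ha h) hb⟩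
  have hp : p = conj a * (a * p + b - b) := by
    rw [add_sub_cancel_right, ← mul_assoc, mul_comm (conj a), mul_conj', ha1]
    simp
  rw [hp]
  exact subring.mul_mem (conj_mem ha) (subring.sub_mem h hb)

end TriLattice

theorem eq_of_mem_convexHull_of_forall_lt {E : Type*} [AddCommGroup E] [Module ℝ E]
    {V : Finset E} {x z : E} (f : E →ₗ[ℝ] ℝ) (hz : z ∈ convexHull ℝ (V : Set E))
    (hlt : ∀ v ∈ V, v ≠ x → f v < f x) (hle : f x ≤ f z) : z = x := by
  obtain ⟨w, hw0, hw1, rfl⟩ := Finset.mem_convexHull'.1 hz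
  have hterm : ∀ v ∈ V, 0 ≤ w v * (f x - f v) := fun v hv => by
    by_cases hvx : v = x
    · simp [hvx]
    · exact mul_nonneg (hw0 v hv) (sub_nonneg.2 (hlt v hv hvx).le)
  have hsum : ∑ v ∈ V, w v * (f x - f v) = f x - f (∑ v ∈ V, w v • v) := by
    simp only [mul_sub, Finset.sum_sub_distrib, ← Finset.sum_mul, hw1, one_mul, map_sum,
      map_smul, smul_eq_mul]
  have hzero : ∀ v ∈ V, v ≠ x → w v = 0 := fun v hv hvx => by
    have h := (Finset.sum_eq_zero_iff_of_nonneg hterm).1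
      (le_antisymm (by linarith) (Finset.sum_nonneg hterm)) v hv
    exact (mul_eq_zero.1 h).resolve_right (sub_ne_zero.2 (hlt v hv hvx).ne')
  calc ∑ v ∈ V, w v • v = ∑ v ∈ V, w v • x :=
        Finset.sum_congr rfl fun v hv => by
          by_cases hvx : v = x
          · rw [hvx]
          · rw [hzero v hv hvx, zero_smul, zero_smul]
    _ = x := by rw [← Finset.sum_smul, hw1, one_smul]

theorem exists_mem_of_eventually_mem_biUnion {E ι : Type*} [NormedAddCommGroup E]
    [NormedSpace ℝ E] {I : Set ι} (hI : I.Finite) {s : ι → Set E}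
    (hs : ∀ i ∈ I, IsClosed (s i)) {x e : E}
    (h : ∀ᶠ t in 𝓝[>] (0 : ℝ), x + t • e ∈ ⋃ i ∈ I, s i) :
    ∃ i ∈ I, x ∈ s i ∧ ∃ t : ℝ, 0 < t ∧ x + t • e ∈ s i := by
  set K := ⋃ i ∈ {i ∈ I | x ∉ s i}, s i
  have hK : IsClosed K := (hI.subset (sep_subset _ _)).isClosed_biUnion fun i hi => hs i hi.1
  have hxK : x ∉ K := fun hx => by
    obtain ⟨i, ⟨-, hxi⟩, hxi'⟩ := mem_iUnion₂.1 hx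
    exact hxi hxi'
  have hlim : Tendsto (fun t : ℝ => x + t • e) (𝓝[>] 0) (𝓝 x) := by
    have : Continuous fun t : ℝ => x + t • e := by fun_prop
    simpa using (this.tendsto 0).mono_left nhdsWithin_le_nhds
  obtain ⟨t, ⟨hS, hnK⟩, ht⟩ :=
    ((h.and (hlim (hK.isOpen_compl.mem_nhds hxK))).and self_mem_nhdsWithin).exists
  obtain ⟨i, hi, hti⟩ := mem_iUnion₂.1 hS
  refine ⟨i, hi, by_contra fun hxi => hnK (mem_biUnion ⟨hi, hxi⟩ hti), t, ht, hti⟩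

def tangentDirs (S : Set ℂ) (x : ℂ) : Set ℂ :=
  {e | ‖e‖ = 1 ∧ ∀ᶠ t in 𝓝[>] (0 : ℝ), x + t • e ∈ S}

lemma tangentDirs_mono {S T : Set ℂ} (h : S ⊆ T) (x : ℂ) : tangentDirs S x ⊆ tangentDirs T x :=
  fun _ ⟨he, hS⟩ => ⟨he, hS.mono fun _ ht => h ht⟩

lemma Convex.sub_mem_tangentDirs {s : Set ℂ} (hs : Convex ℝ s) {x v : ℂ} (hx : x ∈ s)
    (hv : v ∈ s) (hxv : ‖v - x‖ = 1) : v - x ∈ tangentDirs s x :=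
  ⟨hxv, Filter.mem_of_superset (Ioo_mem_nhdsGT zero_lt_one) fun _ ht =>
    hs.add_smul_sub_mem hx hv ⟨ht.1.le, ht.2.le⟩⟩

lemma mul_mem_tangentDirs_image_iff {a b y e : ℂ} {S : Set ℂ} (ha : ‖a‖ = 1) :
    a * e ∈ tangentDirs ((fun z => a * z + b) '' S) (a * y + b) ↔ e ∈ tangentDirs S y := by
  have ha0 : a ≠ 0 := ne_zero_of_norm_ne_zero (ha.symm ▸ one_ne_zero)
  have hinj : Function.Injective fun z => a * z + b := fun z w h => by
    simpa [ha0] using h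
  have hmap : ∀ t : ℝ, a * y + b + t • (a * e) = a * (y + t • e) + b := fun t => by
    simp only [real_smul]; ring
  simp only [tangentDirs, mem_ofPred_eq, norm_mul, ha, one_mul, hmap, hinj.mem_set_image]

/- `0 ≤ (w * conj e).im` says that `w` lies counterclockwise from `e`, less than a half-turn
away; on the half-plane `Re (u ·) < 0` this is the order of slopes in the frame rotated by `u`. -/
lemma im_mul_conj_nonneg_of_div_le {u e w : ℂ} (he : (u * e).re < 0) (hw : (u * w).re < 0)
    (h : (u * e).im / (u * e).re ≤ (u * w).im / (u * w).re) : 0 ≤ (w * conj e).im := by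
  have hu : 0 < normSq u := normSq_pos.2 fun hu => by simp [hu] at he
  have hrot : (u * w * conj (u * e)).im = normSq u * (w * conj e).im := by
    rw [map_mul, show u * w * (conj u * conj e) = u * conj u * (w * conj e) by ring, mul_conj,
      im_ofReal_mul]
  rw [← neg_div_neg_eq (u * e).im, ← neg_div_neg_eq (u * w).im,
    div_le_div_iff₀ (neg_pos.2 he) (neg_pos.2 hw)] at h
  have : 0 ≤ (u * w * conj (u * e)).im := by
    rw [mul_im, conj_re, conj_im]
    linarith
  exact (mul_nonneg_iff_of_pos_left hu).1 (hrot ▸ this)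

lemma eq_of_im_mul_conj_nonneg {u m₁ m₂ : ℂ} (h₁ : ‖m₁‖ = 1) (h₂ : ‖m₂‖ = 1)
    (hu₁ : (u * m₁).re < 0) (hu₂ : (u * m₂).re < 0) (h₁₂ : 0 ≤ (m₁ * conj m₂).im)
    (h₂₁ : 0 ≤ (m₂ * conj m₁).im) : m₁ = m₂ := by
  set c := m₁ * conj m₂ with hc_def
  have hc_im : c.im = 0 := by
    have : m₂ * conj m₁ = conj c := by rw [hc_def, map_mul, conj_conj, mul_comm]
    rw [this, conj_im] at h₂₁
    linarith
  have hc : c = (c.re : ℂ) := Complex.ext (by simp) (by simp [hc_im])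
  have habs : |c.re| = 1 := by
    have : ‖c‖ = 1 := by rw [hc_def, norm_mul, norm_conj, h₁, h₂, one_mul]
    rwa [hc, norm_real, Real.norm_eq_abs] at this
  have hm₁ : m₁ = c.re * m₂ := by
    rw [← hc, hc_def, mul_assoc, mul_comm (conj m₂), mul_conj', h₂]
    simp
  rcases (abs_eq zero_le_one).1 habs with h | h
  · rw [hm₁, h, ofReal_one, one_mul]
  · rw [hm₁, h, ofReal_neg, ofReal_one, neg_one_mul, mul_neg, neg_re] at hu₁
    linarith

lemma exists_re_mul_ne_zero {W : Set ℂ} (hW : W.Countable) (h0 : (0 : ℂ) ∉ W) :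
    ∃ u : ℂ, ∀ w ∈ W, (u * w).re ≠ 0 := by
  have hnull : MeasureTheory.volume (⋃ w ∈ W, {u : ℂ | (u * w).re = 0}) = 0 := by
    refine (MeasureTheory.measure_biUnion_null_iff hW).2 fun w hw => ?_
    have hker : {u : ℂ | (u * w).re = 0} = LinearMap.ker (reLm ∘ₗ LinearMap.mulRight ℝ w) := by
      ext u; simp
    rw [hker]
    refine MeasureTheory.Measure.addHaar_submodule _ _ fun htop => ?_
    have : conj w ∈ LinearMap.ker (reLm ∘ₗ LinearMap.mulRight ℝ w) := htop ▸ Submodule.mem_top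
    have hw0 : w ≠ 0 := fun h => h0 (h ▸ hw)
    simp [mul_comm (conj w), mul_conj, hw0] at this
  by_contra! h
  have huniv : (univ : Set ℂ) ⊆ ⋃ w ∈ W, {u : ℂ | (u * w).re = 0} := fun u _ => by
    obtain ⟨w, hw, hu⟩ := h u
    exact mem_biUnion hw hu
  exact isOpen_univ.measure_ne_zero MeasureTheory.volume univ_nonempty
    (MeasureTheory.measure_mono_null huniv hnull)

lemma Isometry.exists_eq_mul_add_or_eq_mul_conj_add {σ : ℂ → ℂ} (hσ : Isometry σ) :
    ∃ a : ℂ, ‖a‖ = 1 ∧ ((∀ z, σ z = a * z + σ 0) ∨ ∀ z, σ z = a * conj z + σ 0) := by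
  set f := hσ.affineIsometryOfStrictConvexSpace
  have hf : ∀ z, σ z = f.linearIsometry z + σ 0 := fun z => by
    simpa [f] using f.map_vadd 0 z
  obtain ⟨a, ha | ha⟩ := linear_isometry_complex (f.linearIsometry.toLinearIsometryEquiv rfl)
  · refine ⟨a, Circle.norm_coe a, Or.inl fun z => ?_⟩
    have hz := congrArg (· z) ha
    simp only [LinearIsometry.toLinearIsometryEquiv_apply, rotation_apply] at hz
    rw [hf, hz]
  · refine ⟨a, Circle.norm_coe a, Or.inr fun z => ?_⟩
    have hz := congrArg (· z) ha
    simp only [LinearIsometry.toLinearIsometryEquiv_apply, LinearIsometryEquiv.trans_apply,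
      conjLIE_apply, rotation_apply] at hz
    rw [hf, hz]

/-- The vertex set of an edge or a face of `G_D`. -/
def IsLatticeCell (V : Finset ℂ) : Prop :=
  (V : Set ℂ) ⊆ TriLattice ∧ V.Nontrivial ∧ (V : Set ℂ).Pairwise fun p q => ‖p - q‖ = 1

def IsLatticeComplex (S : Set ℂ) : Prop :=
  ∃ C : Set (Finset ℂ), C.Finite ∧ (∀ V ∈ C, IsLatticeCell V) ∧
    S = ⋃ V ∈ C, convexHull ℝ (V : Set ℂ)

def IsLatticeGeneric (u : ℂ) : Prop :=
  ∀ w ∈ TriLattice, w ≠ 0 → (u * w).re ≠ 0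

lemma exists_isLatticeCell_of_isEdgeGD_or_isFaceGD {e : Set ℂ} (h : IsEdgeGD e ∨ IsFaceGD e) :
    ∃ V : Finset ℂ, IsLatticeCell V ∧ e = convexHull ℝ (V : Set ℂ) := by
  rcases h with ⟨u, v, hu, hv, huv, rfl⟩ | ⟨u, v, w, hu, hv, hw, huv, hvw, huw, rfl⟩
  · have hne : u ≠ v := fun h => by simp [h] at huv
    refine ⟨{u, v}, ⟨?_, ⟨u, by simp, v, by simp, hne⟩, ?_⟩, by simp [convexHull_pair]⟩
    · simp [insert_subset_iff, hu, hv]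
    · simp [Set.pairwise_insert, huv, norm_sub_rev v u]
  · have hne : u ≠ v := fun h => by simp [h] at huv
    refine ⟨{u, v, w}, ⟨?_, ⟨u, by simp, v, by simp, hne⟩, ?_⟩, by simp⟩
    · simp [insert_subset_iff, hu, hv, hw]
    · simp [Set.pairwise_insert, huv, hvw, huw, norm_sub_rev v u, norm_sub_rev w v,
        norm_sub_rev w u]

lemma IsShape.isLatticeComplex {S : Set ℂ} (hS : IsShape S) : IsLatticeComplex S := by
  obtain ⟨-, -, F, hF, hcells, rfl⟩ := hS
  choose! g hg using fun e he => exists_isLatticeCell_of_isEdgeGD_or_isFaceGD (hcells e he)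
  refine ⟨g '' F, hF.image g, forall_mem_image.2 fun e he => (hg e he).1, ?_⟩
  rw [sUnion_eq_biUnion, biUnion_image]
  exact iUnion₂_congr fun e he => (hg e he).2

lemma IsLatticeComplex.isCompact {S : Set ℂ} (hS : IsLatticeComplex S) : IsCompact S := by
  obtain ⟨C, hC, -, rfl⟩ := hS
  exact hC.isCompact_biUnion fun V _ => V.finite_toSet.isCompact_convexHull ℝ

lemma IsLatticeComplex.image_conj {S : Set ℂ} (hS : IsLatticeComplex S) :
    IsLatticeComplex (conj '' S) := by
  obtain ⟨C, hC, hcells, rfl⟩ := hS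
  have hinj : Function.Injective (conj : ℂ → ℂ) := (starRingEnd ℂ).injective
  refine ⟨Finset.image conj '' C, hC.image _, forall_mem_image.2 fun V hV => ?_, ?_⟩
  · obtain ⟨hL, hnt, hdist⟩ := hcells V hV
    refine ⟨?_, hnt.image_of_injOn hinj.injOn, ?_⟩
    · rw [Finset.coe_image, image_subset_iff]
      exact fun z hz => TriLattice.conj_mem (hL hz)
    · rw [Finset.coe_image, hinj.injOn.pairwise_image]
      exact hdist.mono' fun p q h => by simpa [Function.onFun, ← map_sub] using h
  · rw [image_iUnion₂, biUnion_image]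
    refine iUnion₂_congr fun V _ => ?_
    rw [Finset.coe_image]
    exact conjAe.toLinearMap.image_convexHull _

lemma IsLatticeCell.sub_mem_tangentDirs {V : Finset ℂ} (hV : IsLatticeCell V) {x v : ℂ}
    (hx : x ∈ V) (hv : v ∈ V) (hvx : v ≠ x) :
    v - x ∈ TriLattice ∧ v - x ∈ tangentDirs (convexHull ℝ (V : Set ℂ)) x :=
  ⟨TriLattice.subring.sub_mem (hV.1 hv) (hV.1 hx),
    (convex_convexHull ℝ _).sub_mem_tangentDirs (subset_convexHull ℝ _ hx)
      (subset_convexHull ℝ _ hv) (hV.2.2 hv hx hvx)⟩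

lemma IsLatticeGeneric.mem_of_forall_re_le {u x : ℂ} {V : Finset ℂ} (hu : IsLatticeGeneric u)
    (hV : (V : Set ℂ) ⊆ TriLattice) (hx : x ∈ convexHull ℝ (V : Set ℂ))
    (hmax : ∀ v ∈ V, (u * v).re ≤ (u * x).re) :
    x ∈ V ∧ ∀ v ∈ V, v ≠ x → (u * v).re < (u * x).re := by
  have hne : V.Nonempty := by
    by_contra h
    simp [Finset.not_nonempty_iff_eq_empty.1 h] at hx
  obtain ⟨v₀, hv₀, hv₀max⟩ := V.exists_max_image (fun v => (u * v).re) hne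
  have hlt : ∀ v ∈ V, v ≠ v₀ → (u * v).re < (u * v₀).re := fun v hv hvv₀ =>
    (hv₀max v hv).lt_of_ne fun heq =>
      hu (v - v₀) (TriLattice.subring.sub_mem (hV hv) (hV hv₀)) (sub_ne_zero.2 hvv₀)
        (by rw [mul_sub, sub_re, heq, sub_self])
  obtain rfl : x = v₀ := eq_of_mem_convexHull_of_forall_lt (reLm ∘ₗ LinearMap.mulLeft ℝ u) hx
    (by simpa using hlt) (by simpa using hmax v₀ hv₀)
  exact ⟨hv₀, hlt⟩

lemma re_mul_neg_of_add_smul_mem_convexHull {V : Finset ℂ} {u x e : ℂ} {t : ℝ} (ht : 0 < t)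
    (he : e ≠ 0) (hlt : ∀ v ∈ V, v ≠ x → (u * v).re < (u * x).re)
    (hz : x + t • e ∈ convexHull ℝ (V : Set ℂ)) : (u * e).re < 0 := by
  by_contra! hre
  have hzx := eq_of_mem_convexHull_of_forall_lt (reLm ∘ₗ LinearMap.mulLeft ℝ u) hz
    (by simpa using hlt) (by
      simp only [map_add, map_smul, LinearMap.comp_apply, LinearMap.mulLeft_apply, reLm_coe,
        smul_eq_mul]
      linarith [mul_nonneg ht.le hre])
  exact he (by simpa [ht.ne'] using hzx)

lemma im_mul_conj_nonneg_of_add_smul_mem_convexHull {V : Finset ℂ} {m x e : ℂ} {t : ℝ}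
    (ht : 0 < t) (hV : ∀ v ∈ V, 0 ≤ (m * conj (v - x)).im)
    (hz : x + t • e ∈ convexHull ℝ (V : Set ℂ)) : 0 ≤ (m * conj e).im := by
  set ψ : ℂ →ₗ[ℝ] ℝ := imLm ∘ₗ LinearMap.mulLeft ℝ m ∘ₗ conjAe.toLinearMap
  have hψ : ∀ z, ψ z = (m * conj z).im := fun z => rfl
  have hcone : ∀ v ∈ V, ψ x ≤ ψ v := fun v hv => by
    simpa only [hψ, map_sub, mul_sub, sub_im, sub_nonneg] using hV v hv
  have hψz : ψ x ≤ ψ (x + t • e) :=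
    convexHull_min hcone (convex_halfSpace_ge ψ.isLinear (ψ x)) hz
  rw [map_add, map_smul, smul_eq_mul, le_add_iff_nonneg_right, hψ e] at hψz
  exact nonneg_of_mul_nonneg_right hψz ht

theorem IsLatticeComplex.exists_extremal_dir {S : Set ℂ} (hS : IsLatticeComplex S) {u x : ℂ}
    (hu : IsLatticeGeneric u) (hx : x ∈ S) (hmax : ∀ z ∈ S, (u * z).re ≤ (u * x).re) :
    x ∈ TriLattice ∧ ∃ m ∈ TriLattice, m ∈ tangentDirs S x ∧
      ∀ e ∈ tangentDirs S x, (u * e).re < 0 ∧ 0 ≤ (m * conj e).im := by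
  obtain ⟨C, hC, hcells, rfl⟩ := hS
  have hvert : ∀ V ∈ C, x ∈ convexHull ℝ (V : Set ℂ) →
      x ∈ V ∧ ∀ v ∈ V, v ≠ x → (u * v).re < (u * x).re := fun V hV hxV =>
    hu.mem_of_forall_re_le (hcells V hV).1 hxV fun v hv =>
      hmax v (mem_biUnion hV (subset_convexHull ℝ _ hv))
  set T : Set ℂ := ⋃ V ∈ {V ∈ C | x ∈ V}, (· - x) '' ((V : Set ℂ) \ {x})
  have hT : ∀ ζ ∈ T, ζ ∈ TriLattice ∧ ζ ∈ tangentDirs (⋃ V ∈ C, convexHull ℝ (V : Set ℂ)) x ∧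
      (u * ζ).re < 0 := by
    intro ζ hζ
    obtain ⟨V, ⟨hV, hxV⟩, v, ⟨hv, hvx⟩, rfl⟩ : ∃ V, (V ∈ C ∧ x ∈ V) ∧
        ∃ v, (v ∈ V ∧ v ≠ x) ∧ v - x = ζ := by simpa [T] using hζ
    obtain ⟨hL, hdir⟩ := (hcells V hV).sub_mem_tangentDirs hxV hv hvx
    refine ⟨hL, tangentDirs_mono (fun z hz => mem_biUnion hV hz) x hdir, ?_⟩
    rw [mul_sub, sub_re, sub_neg]
    exact (hvert V hV (subset_convexHull ℝ _ hxV)).2 v hv hvx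
  have hTfin : T.Finite :=
    (hC.subset (sep_subset _ _)).biUnion fun V _ => (V.finite_toSet.sdiff).image _
  obtain ⟨V₀, hV₀, hxV₀⟩ := mem_iUnion₂.1 hx
  have hxV₀' := (hvert V₀ hV₀ hxV₀).1
  have hTne : T.Nonempty := by
    obtain ⟨v, hv, hvx⟩ := (hcells V₀ hV₀).2.1.exists_ne x
    exact ⟨v - x, mem_biUnion ⟨hV₀, hxV₀'⟩ (mem_image_of_mem _ ⟨hv, hvx⟩)⟩
  -- `m` is the most counterclockwise edge direction at `x`
  obtain ⟨m, hmT, hm⟩ := T.exists_max_image (fun ζ => (u * ζ).im / (u * ζ).re) hTfin hTne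
  obtain ⟨hmL, hmdir, hmu⟩ := hT m hmT
  refine ⟨(hcells V₀ hV₀).1 hxV₀', m, hmL, hmdir, fun e he => ?_⟩
  obtain ⟨V, hV, hxV, t, ht, hzV⟩ := exists_mem_of_eventually_mem_biUnion hC
    (fun V _ => (V.finite_toSet.isCompact_convexHull ℝ).isClosed) he.2
  obtain ⟨hxV', hlt⟩ := hvert V hV hxV
  have he0 : e ≠ 0 := ne_zero_of_norm_ne_zero (he.1.symm ▸ one_ne_zero)
  refine ⟨re_mul_neg_of_add_smul_mem_convexHull ht he0 hlt hzV,
    im_mul_conj_nonneg_of_add_smul_mem_convexHull ht (fun v hv => ?_) hzV⟩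
  by_cases hvx : v = x
  · simp [hvx]
  have hvT : v - x ∈ T := mem_biUnion ⟨hV, hxV'⟩ (mem_image_of_mem _ ⟨hv, hvx⟩)
  exact im_mul_conj_nonneg_of_div_le (hT _ hvT).2.2 hmu (hm _ hvT)

lemma exists_isLatticeGeneric_and_mul {a : ℂ} (ha : a ≠ 0) :
    ∃ u, IsLatticeGeneric u ∧ IsLatticeGeneric (u * a) := by
  set L₀ : Set ℂ := {w ∈ TriLattice | w ≠ 0}
  have hL₀ : L₀.Countable := TriLattice.countable.mono (sep_subset _ _)
  obtain ⟨u, hu⟩ := exists_re_mul_ne_zero (hL₀.union (hL₀.image (a * ·))) (by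
    rintro (⟨-, h⟩ | ⟨w, ⟨-, hw⟩, h⟩)
    · exact h rfl
    · exact mul_ne_zero ha hw h)
  refine ⟨u, fun w hw hw0 => hu w (Or.inl ⟨hw, hw0⟩), fun w hw hw0 => ?_⟩
  rw [mul_assoc]
  exact hu _ (Or.inr ⟨w, ⟨hw, hw0⟩, rfl⟩)

theorem IsLatticeComplex.mem_of_image_mul_add_eq {S S' : Set ℂ} (hS : IsLatticeComplex S)
    (hS' : IsLatticeComplex S') (hne : S'.Nonempty) {a b : ℂ} (ha : ‖a‖ = 1)
    (heq : S = (fun z => a * z + b) '' S') : a ∈ TriLattice ∧ b ∈ TriLattice := by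
  have ha0 : a ≠ 0 := ne_zero_of_norm_ne_zero (ha.symm ▸ one_ne_zero)
  obtain ⟨u, hgen, hgen'⟩ := exists_isLatticeGeneric_and_mul ha0
  obtain ⟨y, hy, hymax⟩ := hS'.isCompact.exists_isMaxOn hne
    (by fun_prop : Continuous fun z => (u * a * z).re).continuousOn
  have hx : a * y + b ∈ S := heq ▸ mem_image_of_mem _ hy
  have hxmax : ∀ z ∈ S, (u * z).re ≤ (u * (a * y + b)).re := by
    rw [heq]
    rintro _ ⟨z, hz, rfl⟩
    have : (u * a * z).re ≤ (u * a * y).re := hymax hz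
    simp only [mul_add, add_re, ← mul_assoc]
    linarith
  obtain ⟨hxL, m, hmL, hm, hmax⟩ := hS.exists_extremal_dir hgen hx hxmax
  obtain ⟨hyL, m', hm'L, hm', hmax'⟩ := hS'.exists_extremal_dir hgen' hy hymax
  have ham' : a * m' ∈ tangentDirs S (a * y + b) :=
    heq ▸ (mul_mem_tangentDirs_image_iff ha).2 hm'
  have ham : conj a * m ∈ tangentDirs S' y := by
    refine (mul_mem_tangentDirs_image_iff (b := b) ha).1 ?_
    rwa [← mul_assoc, mul_conj', ha, ofReal_one, one_pow, one_mul, ← heq]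
  have hcw : 0 ≤ (a * m' * conj m).im := by
    have := (hmax' _ ham).2
    rwa [map_mul, conj_conj, mul_left_comm, ← mul_assoc] at this
  have hmm' : a * m' = m :=
    eq_of_im_mul_conj_nonneg ham'.1 hm.1 (hmax _ ham').1 (hmax m hm).1 hcw (hmax _ ham').2
  have haL : a ∈ TriLattice := by
    have : a = m * conj m' := by
      rw [← hmm', mul_assoc, mul_conj', hm'.1, ofReal_one, one_pow, mul_one]
    rw [this]
    exact TriLattice.subring.mul_mem hmL (TriLattice.conj_mem hm'L)
  refine ⟨haL, ?_⟩
  rw [show b = a * y + b - a * y by ring]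
  exact TriLattice.subring.sub_mem hxL (TriLattice.subring.mul_mem haL hyL)

/-- An isometry between lattice shapes maps lattice vertices to lattice
vertices. -/
theorem isometry_maps_lattice_vertices (S S' : Set ℂ) (σ : ℂ → ℂ)
    (hS : IsShape S) (hS' : MinimalShape S')
    (hσ : IsSimilarityMap σ 1) (heq : S = σ '' S') :
    ∀ p : ℂ, p ∈ TriLattice ↔ σ p ∈ TriLattice := by
  have hiso : Isometry σ := Isometry.of_dist_eq fun p q => by rw [hσ, one_mul]
  have hS'c := hS'.1.isLatticeComplex
  obtain ⟨a, ha, hrot | hrefl⟩ := hiso.exists_eq_mul_add_or_eq_mul_conj_add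
  · have heq' : S = (fun z => a * z + σ 0) '' S' := heq.trans (image_congr fun z _ => hrot z)
    obtain ⟨haL, hbL⟩ := hS.isLatticeComplex.mem_of_image_mul_add_eq hS'c hS'.1.1 ha heq'
    exact fun p => by rw [hrot, TriLattice.mul_add_mem_iff haL hbL ha]
  · have heq' : S = (fun z => a * z + σ 0) '' (conj '' S') := by
      rw [heq, image_image]
      exact image_congr fun z _ => hrefl z
    obtain ⟨haL, hbL⟩ :=
      hS.isLatticeComplex.mem_of_image_mul_add_eq hS'c.image_conj (hS'.1.1.image _) ha heq'
    exact fun p => by rw [hrefl, TriLattice.mul_add_mem_iff haL hbL ha, TriLattice.conj_mem_iff]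
end

section
/- Feasibility inequality for the linear case of role assignment: let B, C, k be positive integers, and define P(λ) = B·λ + C. Suppose λ is an integer with λ ≥ 7, n/k > P(λ − 6), and P(λ) ≥ n/k, for some positive integer n divisible by k. If n ≥ (12B+1)·k·(B+C), then (λ−1)/2 ≥ P(λ) − n/k. -/
/-!
Write `n = k * m`. Minimality of `λ` gives `P(λ) - m < 6B`, while `m ≤ P(λ)` together with
`m ≥ (12B + 1)(B + C)` forces `λ ≥ 12B + 1`, so that `(λ - 1) / 2 ≥ 6B`.
-/

lemma add_one_le_of_add_one_mul_add_le {B C lam a : ℤ} (hB : 0 < B) (hC : 0 ≤ C) (ha : 0 ≤ a)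
    (h : (a + 1) * (B + C) ≤ B * lam + C) : a + 1 ≤ lam := by
  have haC : 0 ≤ a * C := mul_nonneg ha hC
  have hmul : B * (a + 1) ≤ B * lam := by linarith
  exact le_of_mul_le_mul_left hmul hB

theorem role_assignment_linear_case_general (B C k n lam : ℤ)
    (hB : 0 < B) (hC : 0 < C) (hk : 0 < k) (hdvd : k ∣ n)
    (hprev : n / k > B * (lam - 6) + C)
    (hcur : B * lam + C ≥ n / k)
    (hbig : n ≥ (12 * B + 1) * k * (B + C)) :
    (lam - 1) / 2 ≥ B * lam + C - n / k := by
  obtain ⟨m, rfl⟩ := hdvd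
  rw [Int.mul_ediv_cancel_left _ hk.ne'] at hprev hcur ⊢
  have hm : (12 * B + 1) * (B + C) ≤ m :=
    le_of_mul_le_mul_left (by linarith) hk
  have hlam : 12 * B + 1 ≤ lam :=
    add_one_le_of_add_one_mul_add_le hB hC.le (by positivity) (hm.trans hcur)
  have hgap : B * lam + C - m < 6 * B := by linarith
  have hhalf : 6 * B ≤ (lam - 1) / 2 := by omega
  linarith

/-- feasibility inequality for the linear case of role assignment, where
`P(λ) = Bλ + C`. -/
theorem role_assignment_linear_case (B C k n lam : ℤ)
    (hB : 0 < B) (hC : 0 < C) (hk : 0 < k) (hn : 0 < n) (hdvd : k ∣ n)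
    (hlam : 7 ≤ lam)
    (hprev : n / k > B * (lam - 6) + C)
    (hcur : B * lam + C ≥ n / k)
    (hbig : n ≥ (12 * B + 1) * k * (B + C)) :
    (lam - 1) / 2 ≥ B * lam + C - n / k :=
  role_assignment_linear_case_general B C k n lam hB hC hk hdvd hprev hcur hbig
end
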